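/- Let α be a real number and u ∈ C([0,1]) the unitary u(t) = exp(iαt). Then the infimum of lengths of rectifiable paths in the unitary group of C([0,1]) from 1 to u equals min over integers k of max over t ∈ [0,1] of |αt − 2kπ|. -/

import Mathlib

open scoped Real ENNReal

/-!
A path of unitaries `F` from `1` to `u` is a homotopy of maps `[0,1] → S¹` starting at the
constant map `1`, so it lifts through `Circle.exp` to a continuous `g : [0,1]² → ℝ` with
`g (0, ·) = 0`; by uniqueness of lifts, `g (1, t) = αt - 2kπ` for some integer `k`. Since a chord
`|exp (ia) - exp (ib)| = 2 |sin ((a - b) / 2)|` is at least `(1 - d² / 24) |a - b|` when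
`|a - b| ≤ d`, fine partitions show that the length of `s ↦ F s t` is at least `|g (1, t)|`, so
the length of `F` is at least `max_t |αt - 2kπ|`. Conversely, for each `k` the path
`s ↦ exp (is (αt - 2kπ))` is Lipschitz in `s` with constant `max_t |αt - 2kπ|`.
-/

/-- The C* exponential length of a unitary `u` in `C([0,1])`: the infimum of lengths of
rectifiable paths of unitaries (continuous maps `[0,1] → S¹`, with the supremum metric)
from `1` to `u`.  The length of a path is its total variation. -/
noncomputable def celCircle (u : C(unitInterval, Circle)) : ℝ≥0∞ :=
  ⨅ (F : unitInterval → C(unitInterval, Circle)) (_ : Continuous F)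
    (_ : F 0 = 1) (_ : F 1 = u), eVariationOn F Set.univ

open Set Filter Topology

namespace Circle

theorem dist_exp_exp (x y : ℝ) : dist (exp x) (exp y) = 2 * |Real.sin ((x - y) / 2)| := by
  have hx : (exp x : ℂ) = (exp (x - y) - 1) * exp y + exp y := by
    rw [sub_one_mul, sub_add_cancel, ← coe_mul, ← exp_add, sub_add_cancel]
  change dist (exp x : ℂ) (exp y) = _
  rw [Complex.dist_eq, hx, add_sub_cancel_right, norm_mul, norm_coe, mul_one, coe_exp, mul_comm,
    Complex.norm_exp_I_mul_ofReal_sub_one, norm_mul, Real.norm_eq_abs, Real.norm_eq_abs, abs_two]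

theorem dist_exp_exp_le (x y : ℝ) : dist (exp x) (exp y) ≤ |x - y| := by
  rw [dist_exp_exp]
  linarith [Real.abs_sin_le_abs (x := (x - y) / 2), abs_div (x - y) (2 : ℝ), abs_two (α := ℝ)]

theorem mul_abs_sub_le_dist_exp_exp {x y d : ℝ} (h : |x - y| ≤ d) :
    (1 - d ^ 2 / 24) * |x - y| ≤ dist (exp x) (exp y) := by
  set z := x - y
  have hsin : |z| / 2 - (|z| / 2) ^ 3 / 6 ≤ Real.sin (|z| / 2) := by
    rcases (abs_nonneg z).eq_or_lt with h0 | h0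
    · simp [← h0]
    · exact (Real.sin_gt_sub_cube (by positivity)).le
  have habs : Real.sin (|z| / 2) ≤ |Real.sin (z / 2)| := by
    rcases abs_choice z with hz | hz <;> rw [hz]
    · exact le_abs_self _
    · rw [neg_div, Real.sin_neg]; exact neg_le_abs _
  have hcube : |z| ^ 3 ≤ d ^ 2 * |z| := by
    have := pow_le_pow_left₀ (abs_nonneg z) h 2
    nlinarith [abs_nonneg z]
  rw [dist_exp_exp]
  nlinarith

theorem ofReal_mul_abs_sub_le_eVariationOn_exp_comp {γ : unitInterval → ℝ} (hγ : Continuous γ)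
    {d : ℝ} (hd : 0 < d) (hd1 : d ≤ 1) :
    ENNReal.ofReal ((1 - d ^ 2 / 24) * |γ 1 - γ 0|) ≤ eVariationOn (exp ∘ γ) univ := by
  obtain ⟨δ, hδ, hγδ⟩ := Metric.uniformContinuous_iff.mp
    (CompactSpace.uniformContinuous_of_continuous hγ) d hd
  let w : ℕ → unitInterval := Icc.addNSMul zero_le_one (δ / 2)
  obtain ⟨N, hN⟩ := Icc.addNSMul_eq_right zero_le_one (half_pos hδ)
  have hw0 : w 0 = 0 := Subtype.ext (Icc.addNSMul_zero _)
  have hwN : w N = 1 := Subtype.ext (hN N le_rfl)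
  have hstep (i : ℕ) : |γ (w (i + 1)) - γ (w i)| ≤ d := by
    refine (hγδ (lt_of_le_of_lt ?_ (half_lt_self hδ))).le
    refine (abs_projIcc_sub_projIcc _).trans_eq ?_
    rw [add_sub_add_left_eq_sub, succ_nsmul, add_sub_cancel_left, abs_of_pos (half_pos hδ)]
  have hc : 0 ≤ 1 - d ^ 2 / 24 := by nlinarith
  calc ENNReal.ofReal ((1 - d ^ 2 / 24) * |γ 1 - γ 0|)
      ≤ ENNReal.ofReal (∑ i ∈ Finset.range N, (1 - d ^ 2 / 24) * |γ (w (i + 1)) - γ (w i)|) := by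
        rw [← Finset.mul_sum, ← hw0, ← hwN, ← Finset.sum_range_sub (fun i => γ (w i))]
        gcongr
        exact Finset.abs_sum_le_sum_abs _ _
    _ = ∑ i ∈ Finset.range N, ENNReal.ofReal ((1 - d ^ 2 / 24) * |γ (w (i + 1)) - γ (w i)|) :=
        ENNReal.ofReal_sum_of_nonneg fun i _ => by positivity
    _ ≤ ∑ i ∈ Finset.range N, edist (exp (γ (w (i + 1)))) (exp (γ (w i))) := by
        gcongr with i
        rw [edist_dist]
        exact ENNReal.ofReal_le_ofReal (mul_abs_sub_le_dist_exp_exp (hstep i))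
    _ ≤ eVariationOn (exp ∘ γ) univ :=
        eVariationOn.sum_le (Icc.monotone_addNSMul _ (half_pos hδ).le) fun _ => mem_univ _

theorem ofReal_abs_sub_le_eVariationOn_exp_comp {γ : unitInterval → ℝ} (hγ : Continuous γ) :
    ENNReal.ofReal |γ 1 - γ 0| ≤ eVariationOn (exp ∘ γ) univ := by
  have hlim : Tendsto (fun d : ℝ => ENNReal.ofReal ((1 - d ^ 2 / 24) * |γ 1 - γ 0|)) (𝓝[>] 0)
      (𝓝 (ENNReal.ofReal |γ 1 - γ 0|)) := by
    refine tendsto_nhdsWithin_of_tendsto_nhds ((ENNReal.continuous_ofReal.tendsto _).comp ?_)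
    have : Continuous fun d : ℝ => (1 - d ^ 2 / 24) * |γ 1 - γ 0| := by fun_prop
    simpa using this.tendsto 0
  refine le_of_tendsto hlim ?_
  filter_upwards [Ioo_mem_nhdsGT one_pos] with d hd
  exact ofReal_mul_abs_sub_le_eVariationOn_exp_comp hγ hd.1 hd.2.le

theorem exists_eq_add_int_mul_two_pi {X : Type*} [TopologicalSpace X] [PreconnectedSpace X]
    [Nonempty X] {f g : X → ℝ} (hf : Continuous f) (hg : Continuous g)
    (h : ∀ x, exp (f x) = exp (g x)) : ∃ k : ℤ, ∀ x, f x = g x + k * (2 * π) := by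
  obtain ⟨x₀⟩ := ‹Nonempty X›
  obtain ⟨k, hk⟩ := exp_eq_exp.mp (h x₀)
  refine ⟨k, congrFun (isCoveringMap_exp.eq_of_comp_eq hf (hg.add continuous_const) ?_ x₀ hk)⟩
  funext x
  simp [exp_add, h x]

end Circle

theorem ENNReal.ofReal_iSup_le {ι : Sort*} {f : ι → ℝ} {a : ℝ≥0∞}
    (h : ∀ i, ENNReal.ofReal (f i) ≤ a) : ENNReal.ofReal (⨆ i, f i) ≤ a := by
  rcases eq_or_ne a ⊤ with rfl | ha
  · exact le_top
  simp only [ENNReal.ofReal_le_iff_le_toReal ha] at h ⊢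
  exact Real.iSup_le h ENNReal.toReal_nonneg

theorem exists_lift_abs_le_eVariationOn {F : unitInterval → C(unitInterval, Circle)}
    (hF : Continuous F) (hF0 : F 0 = 1) :
    ∃ h : unitInterval → ℝ, Continuous h ∧ (∀ t, Circle.exp (h t) = F 1 t) ∧
      ∀ t, ENNReal.ofReal |h t| ≤ eVariationOn F univ := by
  let H : C(unitInterval × unitInterval, Circle) := ContinuousMap.uncurry ⟨F, hF⟩
  have H0 (t : unitInterval) : H (0, t) = Circle.exp ((0 : C(unitInterval, ℝ)) t) := by
    simp [H, hF0]
  let g := Circle.isCoveringMap_exp.liftHomotopy H 0 H0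
  have hg (s t : unitInterval) : Circle.exp (g (s, t)) = F s t :=
    congrFun (Circle.isCoveringMap_exp.liftHomotopy_lifts H 0 H0) (s, t)
  refine ⟨fun t => g (1, t), g.continuous.comp (.prodMk_right 1), fun t => hg 1 t, fun t => ?_⟩
  have heval : LipschitzWith 1 fun φ : C(unitInterval, Circle) => φ t :=
    LipschitzWith.of_dist_le_mul fun φ ψ => by simpa using ContinuousMap.dist_apply_le_dist t
  calc ENNReal.ofReal |g (1, t)|
      = ENNReal.ofReal |g (1, t) - g (0, t)| := by
        rw [Circle.isCoveringMap_exp.liftHomotopy_zero, ContinuousMap.zero_apply, sub_zero]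
    _ ≤ eVariationOn (Circle.exp ∘ fun s => g (s, t)) univ :=
        Circle.ofReal_abs_sub_le_eVariationOn_exp_comp (g.continuous.comp (.prodMk_left t))
    _ = eVariationOn ((fun φ : C(unitInterval, Circle) => φ t) ∘ F) univ := by
        congr 1; funext s; exact hg s t
    _ ≤ eVariationOn F univ := by
        simpa using heval.lipschitzOnWith.comp_eVariationOn_le (mapsTo_univ F univ)

theorem celCircle_le_ofReal_iSup_abs {u : C(unitInterval, Circle)} {h : unitInterval → ℝ}
    (hh : Continuous h) (hu : ∀ t, u t = Circle.exp (h t)) :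
    celCircle u ≤ ENNReal.ofReal (⨆ t, |h t|) := by
  set M := ⨆ t, |h t|
  have hM (t : unitInterval) : |h t| ≤ M := le_ciSup (isCompact_range hh.abs).bddAbove t
  have hM0 : 0 ≤ M := (abs_nonneg _).trans (hM 0)
  let Φ : ℝ → C(unitInterval, Circle) := fun r => ⟨fun t => Circle.exp (r * h t), by fun_prop⟩
  have hΦ : LipschitzWith M.toNNReal Φ := LipschitzWith.of_dist_le_mul fun r r' => by
    rw [Real.coe_toNNReal _ hM0, ContinuousMap.dist_le (by positivity)]
    intro t
    calc dist (Circle.exp (r * h t)) (Circle.exp (r' * h t))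
        ≤ |r * h t - r' * h t| := Circle.dist_exp_exp_le _ _
      _ = |h t| * dist r r' := by rw [← sub_mul, abs_mul, mul_comm, Real.dist_eq]
      _ ≤ M * dist r r' := by gcongr; exact hM t
  have hvar : eVariationOn (Subtype.val : unitInterval → ℝ) univ = 1 := by
    have := (Subtype.mono_coe _).monotoneOn univ |>.eVariationOn_eq
      (mem_univ (0 : unitInterval)) (mem_univ 1)
    rwa [univ_inter, show Icc (0 : unitInterval) 1 = univ from Icc_bot_top, Icc.coe_one,
      Icc.coe_zero, sub_zero, ENNReal.ofReal_one] at this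
  refine iInf_le_of_le (Φ ∘ Subtype.val) <|
    iInf_le_of_le (hΦ.continuous.comp continuous_subtype_val) <| iInf_le_of_le ?_ <|
    iInf_le_of_le ?_ ?_
  · ext t; simp [Φ]
  · ext t; simp [Φ, hu]
  · calc eVariationOn (Φ ∘ Subtype.val) univ
        ≤ M.toNNReal * eVariationOn (Subtype.val : unitInterval → ℝ) univ :=
          hΦ.lipschitzOnWith.comp_eVariationOn_le (mapsTo_univ _ _)
      _ = ENNReal.ofReal M := by rw [hvar, mul_one, ENNReal.ofReal]

/-- For `u(t) = exp(iαt)` in `C([0,1])`, the infimum of lengths of rectifiable paths of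
unitaries from `1` to `u` equals `min_{k ∈ ℤ} max_{t ∈ [0,1]} |αt − 2kπ|`. -/
theorem cel_exp_eq_min_max (α : ℝ)
    (u : C(unitInterval, Circle)) (hu : ∀ t : unitInterval, u t = Circle.exp (α * t)) :
    celCircle u = ENNReal.ofReal (⨅ k : ℤ, ⨆ t : unitInterval, |α * t - 2 * k * π|) := by
  have hu_sub (k : ℤ) (t : unitInterval) : u t = Circle.exp (α * t - 2 * k * π) := by
    rw [hu, Circle.exp_sub, show 2 * (k : ℝ) * π = k * (2 * π) by ring,
      Circle.exp_int_mul_two_pi, div_one]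
  refine le_antisymm ?_ ?_
  · rw [ENNReal.ofReal_iInf]
    exact le_iInf fun k => celCircle_le_ofReal_iSup_abs (by fun_prop) (hu_sub k)
  · simp only [celCircle, le_iInf_iff]
    intro F hF hF0 hF1
    obtain ⟨h, hh, hhF1, hhF⟩ := exists_lift_abs_le_eVariationOn hF hF0
    obtain ⟨k, hk⟩ := Circle.exists_eq_add_int_mul_two_pi (g := fun t : unitInterval => α * t)
      hh (by fun_prop) fun t => by rw [hhF1, hF1, hu]
    have hbdd : BddBelow (range fun k : ℤ => ⨆ t : unitInterval, |α * t - 2 * k * π|) :=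
      ⟨0, by rintro _ ⟨k, rfl⟩; exact Real.iSup_nonneg fun t => abs_nonneg _⟩
    calc ENNReal.ofReal (⨅ k : ℤ, ⨆ t : unitInterval, |α * t - 2 * k * π|)
        ≤ ENNReal.ofReal (⨆ t : unitInterval, |α * t - 2 * ((-k : ℤ) : ℝ) * π|) :=
          ENNReal.ofReal_le_ofReal (ciInf_le hbdd (-k))
      _ ≤ eVariationOn F univ := ENNReal.ofReal_iSup_le fun t => by
          convert hhF t using 3; rw [hk t]; push_cast; ring
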